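/- arXiv:1905.09765 — 3 statements merged into one kernel-verified Lean document; each statement's English description precedes it below -/
import Mathlib

section
/- Let ψ(t) = (φ(√t))^p with φ a concave index function and 0 < p < 1, and define φ_app(α) := sup_{τ≥0}[ψ(τ) − τ/α]. Then for all C > 1 and α > 0 it holds φ_app(C·α) ≤ C^{p/(2−p)} · φ_app(α). -/
/-!
Put `k = C ^ (1 / (2 - p))`. Concavity and `φ 0 = 0` give `φ (k s) ≤ k φ s` for `k ≥ 1`, hence
`ψ (k² σ) ≤ k ^ p ψ σ`. Substituting `τ = k² σ` in the supremum defining `φ_app (C α)`, and using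
`k² = C ^ (p / (2 - p)) * C` and `k ^ p = C ^ (p / (2 - p))`, every term `ψ τ - τ / (C α)` is bounded by
`C ^ (p / (2 - p)) * (ψ σ - σ / α)`.
-/

open Real Set

lemma ConcaveOn.map_mul_le_mul_map {f : ℝ → ℝ} (hf : ConcaveOn ℝ (Ici 0) f) (h0 : 0 ≤ f 0)
    {k s : ℝ} (hk : 1 ≤ k) (hs : 0 ≤ s) : f (k * s) ≤ k * f s := by
  have hk0 : 0 < k := one_pos.trans_le hk
  have hconv := hf.2 (mem_Ici.2 (mul_nonneg hk0.le hs)) (mem_Ici.2 le_rfl)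
    (inv_nonneg.2 hk0.le) (sub_nonneg.2 (inv_le_one_of_one_le₀ hk)) (add_sub_cancel _ _)
  simp only [smul_eq_mul, mul_zero, add_zero, inv_mul_cancel_left₀ hk0.ne'] at hconv
  have : k⁻¹ * f (k * s) ≤ f s := by
    linarith [mul_nonneg (sub_nonneg.2 (inv_le_one_of_one_le₀ hk)) h0]
  calc f (k * s) = k * (k⁻¹ * f (k * s)) := by rw [mul_inv_cancel_left₀ hk0.ne']
    _ ≤ k * f s := mul_le_mul_of_nonneg_left this hk0.le

lemma rpow_sqrt_mul_sq_le {φ : ℝ → ℝ} (hmono : MonotoneOn φ (Ici 0)) (h0 : φ 0 = 0)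
    (hconc : ConcaveOn ℝ (Ici 0) φ) {p k σ : ℝ} (hp : 0 ≤ p) (hk : 1 ≤ k) :
    φ (√(k ^ 2 * σ)) ^ p ≤ k ^ p * φ (√σ) ^ p := by
  have hk0 : 0 ≤ k := zero_le_one.trans hk
  have hnonneg : ∀ x, 0 ≤ x → 0 ≤ φ x := fun x hx =>
    h0 ▸ hmono (mem_Ici.2 le_rfl) (mem_Ici.2 hx) hx
  rw [sqrt_mul (sq_nonneg k), sqrt_sq hk0, ← mul_rpow hk0 (hnonneg _ (sqrt_nonneg σ))]
  exact rpow_le_rpow (hnonneg _ (mul_nonneg hk0 (sqrt_nonneg σ)))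
    (hconc.map_mul_le_mul_map h0.ge hk (sqrt_nonneg σ)) hp

noncomputable def phiApp (ψ : ℝ → ℝ) (α : ℝ) : ℝ :=
  sSup {y : ℝ | ∃ τ ≥ (0:ℝ), y = ψ τ - τ / α}

lemma phiApp_mul_le {ψ : ℝ → ℝ} {a K C α : ℝ} (ha : 0 < a) (hK : 0 ≤ K) (haKC : a = K * C)
    (hψ : ∀ σ ≥ (0:ℝ), ψ (a * σ) ≤ K * ψ σ)
    (hbdd : BddAbove {y : ℝ | ∃ τ ≥ (0:ℝ), y = ψ τ - τ / α}) :
    phiApp ψ (C * α) ≤ K * phiApp ψ α := by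
  have hC : C ≠ 0 := by rintro rfl; simp [haKC] at ha
  refine csSup_le ⟨_, 0, le_rfl, rfl⟩ ?_
  rintro _ ⟨τ, hτ, rfl⟩
  obtain ⟨σ, hσ, rfl⟩ : ∃ σ ≥ (0:ℝ), τ = a * σ :=
    ⟨τ / a, div_nonneg hτ ha.le, (mul_div_cancel₀ τ ha.ne').symm⟩
  have hlin : a * σ / (C * α) = K * (σ / α) := by
    rw [haKC, mul_right_comm, mul_comm C α, mul_div_mul_right _ _ hC, mul_div_assoc]
  calc ψ (a * σ) - a * σ / (C * α) ≤ K * (ψ σ - σ / α) := by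
        rw [hlin, mul_sub]; linarith [hψ σ hσ]
    _ ≤ K * phiApp ψ α := mul_le_mul_of_nonneg_left (le_csSup hbdd ⟨σ, hσ, rfl⟩) hK

theorem phi_app_scaling_general
    (φ : ℝ → ℝ)
    (hmono : StrictMonoOn φ (Set.Ici 0))
    (h0 : φ 0 = 0)
    (hconc : ConcaveOn ℝ (Set.Ici 0) φ)
    (p : ℝ) (hp0 : 0 < p) (hp1 : p < 1)
    (C α : ℝ) (hC : 1 < C)
    (hbdd : BddAbove {y : ℝ | ∃ τ ≥ (0:ℝ), y = Real.rpow (φ (Real.sqrt τ)) p - τ / α}) :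
    sSup {y : ℝ | ∃ τ ≥ (0:ℝ), y = Real.rpow (φ (Real.sqrt τ)) p - τ / (C * α)}
      ≤ Real.rpow C (p / (2 - p)) *
        sSup {y : ℝ | ∃ τ ≥ (0:ℝ), y = Real.rpow (φ (Real.sqrt τ)) p - τ / α} := by
  have hC0 : 0 < C := one_pos.trans hC
  have h2p : 2 - p ≠ 0 := by linarith
  set k := C ^ (1 / (2 - p))
  have hk : 1 ≤ k := one_le_rpow hC.le (by simp only [one_div, inv_nonneg]; linarith)
  have hkp : k ^ p = C ^ (p / (2 - p)) := by
    rw [← rpow_mul hC0.le]; congr 1; field_simp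
  have hk2 : k ^ 2 = C ^ (p / (2 - p)) * C := by
    rw [← rpow_natCast, ← rpow_mul hC0.le, ← rpow_add_one hC0.ne']; congr 1; field_simp; ring
  simp only [rpow_eq_pow] at hbdd ⊢
  rw [← hkp]
  exact phiApp_mul_le (ψ := fun τ => φ √τ ^ p) (by positivity) (by positivity) (hkp ▸ hk2)
    (fun σ _ => rpow_sqrt_mul_sq_le hmono.monotoneOn h0 hconc hp0.le hk) hbdd

/-- For ψ(t) = φ(√t)^p with φ a concave index function and 0 < p < 1, and
φ_app(α) = sup_{τ≥0}[ψ(τ) − τ/α], it holds φ_app(C·α) ≤ C^(p/(2−p))·φ_app(α)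
for all C > 1, α > 0. -/
theorem phi_app_scaling
    (φ : ℝ → ℝ)
    (hcont : ContinuousOn φ (Set.Ici 0))
    (hmono : StrictMonoOn φ (Set.Ici 0))
    (h0 : φ 0 = 0)
    (hconc : ConcaveOn ℝ (Set.Ici 0) φ)
    (p : ℝ) (hp0 : 0 < p) (hp1 : p < 1)
    (C α : ℝ) (hC : 1 < C) (hα : 0 < α)
    (hbdd : BddAbove {y : ℝ | ∃ τ ≥ (0:ℝ), y = Real.rpow (φ (Real.sqrt τ)) p - τ / α}) :
    sSup {y : ℝ | ∃ τ ≥ (0:ℝ), y = Real.rpow (φ (Real.sqrt τ)) p - τ / (C * α)}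
      ≤ Real.rpow C (p / (2 - p)) *
        sSup {y : ℝ | ∃ τ ≥ (0:ℝ), y = Real.rpow (φ (Real.sqrt τ)) p - τ / α} :=
  phi_app_scaling_general φ hmono h0 hconc p hp0 hp1 C α hC hbdd
end

section
/- Let φ be a concave index function, p ∈ (0,1], ψ(t) = φ(√t)^p, and φ_app(α) = sup_{τ≥0}[ψ(τ) − τ/α]. Then φ_app(α) → 0 as α → 0⁺. -/
open Real Set Filter

lemma concave_sublinear (φ : ℝ → ℝ) (h0 : φ 0 = 0)
    (hconc : ConcaveOn ℝ (Set.Ici 0) φ) {a b : ℝ} (ha : 0 < a) (hab : a ≤ b) :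
    φ b ≤ (b / a) * φ a := by
  have hb : 0 < b := ha.trans_le hab
  have h1 : (0:ℝ) ≤ a / b := by positivity
  have h2 : (0:ℝ) ≤ 1 - a / b := by
    have : a / b ≤ 1 := (div_le_one hb).2 hab
    linarith
  have key := hconc.2 (Set.mem_Ici.2 hb.le) (Set.mem_Ici.2 (le_refl (0:ℝ))) h1 h2 (by ring)
  simp only [smul_eq_mul, h0, mul_zero, add_zero] at key
  rw [div_mul_cancel₀ a hb.ne'] at key
  -- key : a/b * φ b ≤ φ a
  rw [div_mul_eq_mul_div, le_div_iff₀ ha, mul_comm b (φ a)]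
  have : a / b * φ b * b ≤ φ a * b := by nlinarith
  calc φ b * a = (a / b * φ b) * b := by field_simp
    _ ≤ φ a * b := this

/-- For ψ(t) = φ(√t)^p with φ a concave index function and 0 < p ≤ 1, the
approximation error φ_app(α) = sup_{τ≥0}[ψ(τ) − τ/α] tends to 0 as α → 0⁺. -/
theorem phi_app_tendsto_zero
    (φ : ℝ → ℝ)
    (hcont : ContinuousOn φ (Set.Ici 0))
    (hmono : StrictMonoOn φ (Set.Ici 0))
    (h0 : φ 0 = 0)
    (hconc : ConcaveOn ℝ (Set.Ici 0) φ)
    (p : ℝ) (hp0 : 0 < p) (hp1 : p ≤ 1) :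
    Filter.Tendsto
      (fun α : ℝ => sSup {y : ℝ | ∃ τ ≥ (0:ℝ),
        y = Real.rpow (φ (Real.sqrt τ)) p - τ / α})
      (nhdsWithin 0 (Set.Ioi 0)) (nhds 0) := by
  have hφnonneg : ∀ s, 0 ≤ s → 0 ≤ φ s := by
    intro s hs
    rcases eq_or_lt_of_le hs with h | h
    · simp [← h, h0]
    · have := hmono (Set.mem_Ici.2 le_rfl) (Set.mem_Ici.2 hs) h
      linarith [h0]
  rw [Metric.tendsto_nhdsWithin_nhds]
  intro ε hε
  have hc0 : ContinuousWithinAt φ (Set.Ici 0) 0 := hcont 0 (Set.mem_Ici.2 le_rfl)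
  have hr : (0:ℝ) < (ε/2) ^ (1/p) := Real.rpow_pos_of_pos (by linarith) _
  rw [Metric.continuousWithinAt_iff] at hc0
  obtain ⟨d, hd, hdprop⟩ := hc0 _ hr
  set s₀ : ℝ := d / 2 with hs₀def
  have hs₀pos : 0 < s₀ := by positivity
  have hφs₀ : φ s₀ < (ε/2) ^ (1/p) := by
    have := hdprop (Set.mem_Ici.2 hs₀pos.le) (by
      rw [Real.dist_eq, sub_zero, abs_of_pos hs₀pos]; rw [hs₀def]; linarith)
    rwa [Real.dist_eq, h0, sub_zero, abs_of_nonneg (hφnonneg _ hs₀pos.le)] at this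
  set δ : ℝ := s₀ ^ 2 with hδdef
  have hδpos : 0 < δ := by positivity
  have hψs₀ : Real.rpow (φ s₀) p ≤ ε / 2 := by
    have h2 : Real.rpow (φ s₀) p ≤ Real.rpow ((ε/2) ^ (1/p)) p :=
      Real.rpow_le_rpow (hφnonneg _ hs₀pos.le) hφs₀.le hp0.le
    rwa [show Real.rpow ((ε/2) ^ (1/p)) p = ((ε/2) ^ (1/p)) ^ p from rfl,
      ← Real.rpow_mul (by linarith : (0:ℝ) ≤ ε/2), one_div_mul_cancel hp0.ne',
      Real.rpow_one] at h2
  -- small τ bound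
  have hsmall : ∀ τ, 0 ≤ τ → τ ≤ δ → Real.rpow (φ (Real.sqrt τ)) p ≤ ε / 2 := by
    intro τ hτ hτδ
    have hsq : Real.sqrt τ ≤ s₀ := by
      rw [show s₀ = Real.sqrt δ by rw [hδdef, Real.sqrt_sq hs₀pos.le]]
      exact Real.sqrt_le_sqrt hτδ
    have h1 : φ (Real.sqrt τ) ≤ φ s₀ :=
      hmono.monotoneOn (Set.mem_Ici.2 (Real.sqrt_nonneg _)) (Set.mem_Ici.2 hs₀pos.le) hsq
    exact le_trans (Real.rpow_le_rpow (hφnonneg _ (Real.sqrt_nonneg _)) h1 hp0.le) hψs₀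
  -- large τ bound: ψ τ ≤ K₀ τ
  set K₀ : ℝ := Real.rpow (φ s₀) p / δ with hK₀def
  have hφs₀pos : 0 < φ s₀ := by
    have := hmono (Set.mem_Ici.2 le_rfl) (Set.mem_Ici.2 hs₀pos.le) hs₀pos
    linarith [h0]
  have hK₀pos : 0 < K₀ := div_pos (Real.rpow_pos_of_pos hφs₀pos _) hδpos
  have hbig : ∀ τ, δ ≤ τ → Real.rpow (φ (Real.sqrt τ)) p ≤ K₀ * τ := by
    intro τ hτδ
    have hτpos : 0 < τ := hδpos.trans_le hτδ
    have hsq : s₀ ≤ Real.sqrt τ := by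
      rw [show s₀ = Real.sqrt δ by rw [hδdef, Real.sqrt_sq hs₀pos.le]]
      exact Real.sqrt_le_sqrt hτδ
    have h1 : φ (Real.sqrt τ) ≤ (Real.sqrt τ / s₀) * φ s₀ :=
      concave_sublinear φ h0 hconc hs₀pos hsq
    have hq : (0:ℝ) ≤ Real.sqrt τ / s₀ := by positivity
    have h2 : Real.rpow (φ (Real.sqrt τ)) p ≤
        Real.rpow (Real.sqrt τ / s₀) p * Real.rpow (φ s₀) p := by
      have := Real.rpow_le_rpow (hφnonneg _ (Real.sqrt_nonneg _)) h1 hp0.le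
      rwa [Real.mul_rpow hq hφs₀pos.le] at this
    have h3 : Real.rpow (Real.sqrt τ / s₀) p ≤ τ / δ := by
      have he : Real.sqrt τ / s₀ = Real.sqrt (τ / δ) := by
        rw [Real.sqrt_div hτpos.le, hδdef, Real.sqrt_sq hs₀pos.le]
      have hτδ1 : (1:ℝ) ≤ τ / δ := (one_le_div hδpos).2 hτδ
      have hτδ0 : (0:ℝ) ≤ τ / δ := by linarith
      show (Real.sqrt τ / s₀) ^ p ≤ τ / δ
      rw [he, Real.sqrt_eq_rpow]
      calc ((τ/δ) ^ ((1:ℝ)/2)) ^ p = (τ/δ) ^ ((1:ℝ)/2 * p) := by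
            rw [← Real.rpow_mul hτδ0]
        _ ≤ (τ/δ) ^ (1:ℝ) := Real.rpow_le_rpow_of_exponent_le hτδ1 (by linarith)
        _ = τ / δ := Real.rpow_one _
    calc Real.rpow (φ (Real.sqrt τ)) p
        ≤ Real.rpow (Real.sqrt τ / s₀) p * Real.rpow (φ s₀) p := h2
      _ ≤ (τ / δ) * Real.rpow (φ s₀) p := by
          exact mul_le_mul_of_nonneg_right h3 (Real.rpow_pos_of_pos hφs₀pos p).le
      _ = K₀ * τ := by rw [hK₀def]; ring
  refine ⟨1 / K₀, by positivity, fun α hα hαd => ?_⟩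
  have hαpos : 0 < α := hα
  rw [Real.dist_eq, sub_zero, abs_of_pos hαpos] at hαd
  have hKα : K₀ ≤ 1 / α := by
    rw [le_div_iff₀ hαpos]
    rw [lt_div_iff₀ hK₀pos] at hαd
    nlinarith
  set S : Set ℝ := {y : ℝ | ∃ τ ≥ (0:ℝ),
      y = Real.rpow (φ (Real.sqrt τ)) p - τ / α} with hSdef
  have hub : ∀ y ∈ S, y ≤ ε / 2 := by
    rintro y ⟨τ, hτ, rfl⟩
    rcases le_or_gt τ δ with h | h
    · have := hsmall τ hτ h
      have hτα : 0 ≤ τ / α := by positivity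
      linarith
    · have h1 := hbig τ h.le
      have h2 : K₀ * τ ≤ τ / α := by
        rw [div_eq_mul_inv, mul_comm τ α⁻¹]
        exact mul_le_mul_of_nonneg_right (by rwa [one_div] at hKα) hτ
      linarith [hε]
  have hmem0 : (0:ℝ) ∈ S := by
    refine ⟨0, le_rfl, ?_⟩
    rw [Real.sqrt_zero, h0]
    show (0:ℝ) = (0:ℝ) ^ p - 0 / α
    rw [Real.zero_rpow hp0.ne']
    simp
  have hbdd : BddAbove S := ⟨ε / 2, fun y hy => hub y hy⟩
  have hle : sSup S ≤ ε / 2 := csSup_le ⟨0, hmem0⟩ hub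
  have hge : (0:ℝ) ≤ sSup S := le_csSup hbdd hmem0
  rw [Real.dist_eq, sub_zero, abs_of_nonneg hge]
  linarith
end

section
/- Let F: X → Y satisfy the Taylor remainder bound ‖F(f) − F(f†) − F'(f†)(f − f†)‖ ≤ (Ǩ/2)‖f − f†‖^{η+1}, and suppose ‖h‖_{−a} ≤ K̄‖F'(f†)h‖ for all h ∈ X, and the interpolation inequality ‖h‖^{η+1} ≤ ‖h‖_{−a}·‖h‖_{a/η}^η holds. Then for any f with ‖f − f†‖_{a/η} ≤ τ where τ̃ := K̄Ǩτ^η/2 < 1, one has ‖f − f†‖_{−a} ≤ (K̄/(1 − τ̃))·‖F(f) − F(f†)‖. -/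
/-- Conditional stability under weak Hölder-type nonlinearity (Proposition in Example Q2):
from the Taylor remainder bound, the smoothing property ‖h‖_{−a} ≤ K̄‖F'(f†)h‖ and the
interpolation inequality ‖h‖^(η+1) ≤ ‖h‖_{−a}‖h‖_{a/η}^η, for f with ‖f − f†‖_{a/η} ≤ τ
and ttil = K̄Ǩτ^η/2 < 1 one gets ‖f − f†‖_{−a} ≤ (K̄/(1 − ttil))‖F(f) − F(f†)‖.
Here Nneg is the norm ‖·‖_{−a} and Npos the norm ‖·‖_{a/η} of the Hilbert scale. -/
theorem weak_nonlinearity_stability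
    {X Y : Type*} [NormedAddCommGroup X] [InnerProductSpace ℝ X]
    [NormedAddCommGroup Y] [InnerProductSpace ℝ Y]
    (F : X → Y) (A : X →L[ℝ] Y) (fdag f : X)
    (Nneg Npos : X → ℝ)
    (Kbar Kcheck η τ : ℝ)
    (hη0 : 0 < η) (hη1 : η ≤ 1)
    (hKbar : 0 < Kbar) (hKcheck : 0 < Kcheck) (hτ : 0 < τ)
    (hNneg : ∀ h : X, 0 ≤ Nneg h)
    (hNpos : 0 ≤ Npos (f - fdag))
    (htaylor : ‖F f - F fdag - A (f - fdag)‖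
      ≤ Kcheck / 2 * Real.rpow ‖f - fdag‖ (η + 1))
    (hsmooth : ∀ h : X, Nneg h ≤ Kbar * ‖A h‖)
    (hinterp : Real.rpow ‖f - fdag‖ (η + 1)
      ≤ Nneg (f - fdag) * Real.rpow (Npos (f - fdag)) η)
    (hball : Npos (f - fdag) ≤ τ)
    (hsmall : Kbar * Kcheck * Real.rpow τ η / 2 < 1) :
    Nneg (f - fdag)
      ≤ Kbar / (1 - Kbar * Kcheck * Real.rpow τ η / 2) * ‖F f - F fdag‖ := by
  set N := Nneg (f - fdag) with hN
  set P := Npos (f - fdag) with hP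
  set ttil := Kbar * Kcheck * Real.rpow τ η / 2 with httil
  have httil0 : 0 ≤ ttil := by
    have : 0 ≤ Real.rpow τ η := Real.rpow_nonneg hτ.le η
    positivity
  have hPτ : Real.rpow P η ≤ Real.rpow τ η :=
    Real.rpow_le_rpow hNpos hball hη0.le
  have key : N ≤ Kbar * ‖F f - F fdag‖ + ttil * N := by
    have h1 : ‖A (f - fdag)‖ ≤ ‖F f - F fdag‖ + Kcheck / 2 * Real.rpow ‖f - fdag‖ (η + 1) := by
      calc ‖A (f - fdag)‖ = ‖F f - F fdag - (F f - F fdag - A (f - fdag))‖ := by rw [sub_sub_cancel]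
        _ ≤ ‖F f - F fdag‖ + ‖F f - F fdag - A (f - fdag)‖ := norm_sub_le _ _
        _ ≤ _ := by linarith
    have h2 : Kcheck / 2 * Real.rpow ‖f - fdag‖ (η + 1) ≤ Kcheck / 2 * (N * Real.rpow τ η) := by
      have : Real.rpow ‖f - fdag‖ (η + 1) ≤ N * Real.rpow τ η := by
        calc Real.rpow ‖f - fdag‖ (η + 1) ≤ N * Real.rpow P η := hinterp
          _ ≤ N * Real.rpow τ η := by
            exact mul_le_mul_of_nonneg_left hPτ (hNneg _)
      nlinarith [hKcheck.le]
    calc N ≤ Kbar * ‖A (f - fdag)‖ := hsmooth _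
      _ ≤ Kbar * (‖F f - F fdag‖ + Kcheck / 2 * (N * Real.rpow τ η)) := by
          apply mul_le_mul_of_nonneg_left _ hKbar.le
          linarith
      _ = Kbar * ‖F f - F fdag‖ + ttil * N := by rw [httil]; ring
  have hden : 0 < 1 - ttil := by linarith
  rw [div_mul_eq_mul_div, le_div_iff₀ hden]
  nlinarith
end
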